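/- Let 0 < q < 1, a < b, and f : [a,b] → ℝ continuous and convex. Then f((aq+b)/(1+q)) ≤ (1/(b−a))·R_q(f;a,b) ≤ (1/(1+q))·(q·f(a) + f(b)). -/

import Mathlib

open scoped BigOperators
open Set

/-!
The weights `(1 - q) q ^ k` form a probability distribution on the nodes `a + (b - a) q ^ k` with
barycenter `a + (b - a) / (1 + q) = (a q + b) / (1 + q)`. The left inequality is then Jensen's
inequality, obtained by summing the supporting line of `f` at the barycenter against these weights;
the right one comes from summing the chord bound `f (a + (b - a) t) ≤ (1 - t) f a + t f b`.
The series converges because its terms are squeezed between those of these two affine bounds.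
-/

variable {ι : Type*} {w x : ι → ℝ} {m : ℝ}

theorem Summable.of_le_of_le {f g h : ι → ℝ} (hg : Summable g) (hh : Summable h)
    (hgf : ∀ k, g k ≤ f k) (hfh : ∀ k, f k ≤ h k) : Summable f := by
  have hd := (hh.sub hg).of_nonneg_of_le (fun k ↦ sub_nonneg.2 (hgf k))
    (fun k ↦ sub_le_sub_right (hfh k) _)
  simpa using hd.add hg

theorem HasSum.mul_affine (hw1 : HasSum w 1) (hwx : HasSum (fun k ↦ w k * x k) m) (α c : ℝ) :
    HasSum (fun k ↦ w k * (α + c * (x k - m))) α := by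
  have h := (hw1.mul_left α).add ((hwx.sub (hw1.mul_right m)).mul_left c)
  rw [one_mul, mul_one, sub_self, mul_zero, add_zero] at h
  exact h.congr_fun fun k ↦ by ring

namespace ConvexOn

variable {S : Set ℝ} {f : ℝ → ℝ}

theorem add_rightDeriv_mul_sub_le (hf : ConvexOn ℝ S f) {y : ℝ} (hm : m ∈ interior S)
    (hy : y ∈ S) : f m + derivWithin f (Ioi m) m * (y - m) ≤ f y := by
  rcases lt_trichotomy y m with hym | rfl | hmy
  · have hslope : slope f y m ≤ derivWithin f (Ioi m) m :=
      (hf.slope_le_leftDeriv_of_mem_interior hy hm hym).trans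
        (hf.leftDeriv_le_rightDeriv_of_mem_interior hm)
    rw [slope_def_field, div_le_iff₀ (sub_pos.2 hym)] at hslope
    linarith
  · simp
  · have hslope := hf.rightDeriv_le_slope_of_mem_interior hm hy hmy
    rw [slope_def_field, le_div_iff₀ (sub_pos.2 hmy)] at hslope
    linarith

theorem map_le_tsum_of_hasSum (hf : ConvexOn ℝ S f) (hw : ∀ k, 0 ≤ w k) (hw1 : HasSum w 1)
    (hx : ∀ k, x k ∈ S) (hwx : HasSum (fun k ↦ w k * x k) m) (hm : m ∈ interior S)
    (hwf : Summable fun k ↦ w k * f (x k)) : f m ≤ ∑' k, w k * f (x k) :=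
  hasSum_le (fun k ↦ mul_le_mul_of_nonneg_left (hf.add_rightDeriv_mul_sub_le hm (hx k)) (hw k))
    (hw1.mul_affine hwx _ _) hwf.hasSum

theorem apply_add_sub_mul_le {a b t : ℝ} (hf : ConvexOn ℝ (Icc a b) f) (hab : a ≤ b)
    (ht : t ∈ Icc 0 1) : f (a + (b - a) * t) ≤ (1 - t) * f a + t * f b := by
  have h := hf.2 (left_mem_Icc.2 hab) (right_mem_Icc.2 hab) (sub_nonneg.2 ht.2) ht.1
    (sub_add_cancel 1 t)
  rwa [smul_eq_mul, smul_eq_mul, show (1 - t) * a + t * b = a + (b - a) * t by ring] at h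

theorem hermite_hadamard_tsum {a b τ : ℝ} {t : ι → ℝ} (hf : ConvexOn ℝ (Icc a b) f) (hab : a < b)
    (hw : ∀ k, 0 ≤ w k) (hw1 : HasSum w 1) (ht : ∀ k, t k ∈ Icc 0 1)
    (hwt : HasSum (fun k ↦ w k * t k) τ) (hτ : τ ∈ Ioo 0 1) :
    f (a + (b - a) * τ) ≤ ∑' k, w k * f (a + (b - a) * t k) ∧
      ∑' k, w k * f (a + (b - a) * t k) ≤ (1 - τ) * f a + τ * f b := by
  have hx k : a + (b - a) * t k ∈ Icc a b := by
    have := ht k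
    constructor <;> nlinarith [this.1, this.2]
  have hm : a + (b - a) * τ ∈ interior (Icc a b) := by
    rw [interior_Icc]
    constructor <;> nlinarith [hτ.1, hτ.2]
  have hwx : HasSum (fun k ↦ w k * (a + (b - a) * t k)) (a + (b - a) * τ) := by
    have h := (hw1.mul_left a).add (hwt.mul_left (b - a))
    rw [mul_one] at h
    exact h.congr_fun fun k ↦ by ring
  have hchord : HasSum (fun k ↦ w k * ((1 - t k) * f a + t k * f b))
      ((1 - τ) * f a + τ * f b) :=
    (hw1.mul_affine hwt _ (f b - f a)).congr_fun fun k ↦ by ring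
  have hupper k : w k * f (a + (b - a) * t k) ≤ w k * ((1 - t k) * f a + t k * f b) :=
    mul_le_mul_of_nonneg_left (hf.apply_add_sub_mul_le hab.le (ht k)) (hw k)
  have hsum : Summable fun k ↦ w k * f (a + (b - a) * t k) :=
    (hw1.mul_affine hwx _ _).summable.of_le_of_le hchord.summable
      (fun k ↦ mul_le_mul_of_nonneg_left (hf.add_rightDeriv_mul_sub_le hm (hx k)) (hw k)) hupper
  exact ⟨hf.map_le_tsum_of_hasSum hw hw1 hx hwx hm hsum, hasSum_le hupper hsum.hasSum hchord⟩

end ConvexOn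

theorem hasSum_one_sub_mul_pow {q : ℝ} (hq0 : 0 ≤ q) (hq1 : q < 1) :
    HasSum (fun k : ℕ ↦ (1 - q) * q ^ k) 1 := by
  simpa [(sub_pos.2 hq1).ne'] using (hasSum_geometric_of_lt_one hq0 hq1).mul_left (1 - q)

theorem hasSum_one_sub_mul_pow_mul_pow {q : ℝ} (hq0 : 0 ≤ q) (hq1 : q < 1) :
    HasSum (fun k : ℕ ↦ (1 - q) * q ^ k * q ^ k) (1 + q)⁻¹ := by
  have hqq : q * q < 1 := by nlinarith
  have h := (hasSum_geometric_of_lt_one (mul_nonneg hq0 hq0) hqq).mul_left (1 - q)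
  rw [show 1 - q * q = (1 - q) * (1 + q) by ring, mul_inv,
    mul_inv_cancel_left₀ (sub_pos.2 hq1).ne'] at h
  exact h.congr_fun fun k ↦ by ring

theorem q_hermite_hadamard_Rq_general (q a b : ℝ) (f : ℝ → ℝ)
    (hq0 : 0 < q) (hq1 : q < 1) (hab : a < b)
    (hconv : ConvexOn ℝ (Icc a b) f) :
    f ((a * q + b) / (1 + q)) ≤
        (1 / (b - a)) * ((b - a) * (1 - q) * ∑' k : ℕ, f (a + (b - a) * q ^ k) * q ^ k) ∧
      (1 / (b - a)) * ((b - a) * (1 - q) * ∑' k : ℕ, f (a + (b - a) * q ^ k) * q ^ k) ≤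
        (1 / (1 + q)) * (q * f a + f b) := by
  have hq : 0 < 1 + q := by linarith
  have hR : (1 / (b - a)) * ((b - a) * (1 - q) * ∑' k : ℕ, f (a + (b - a) * q ^ k) * q ^ k) =
      ∑' k : ℕ, (1 - q) * q ^ k * f (a + (b - a) * q ^ k) := by
    rw [← tsum_mul_left, ← tsum_mul_left]
    have hba : b - a ≠ 0 := (sub_pos.2 hab).ne'
    exact tsum_congr fun k ↦ by field_simp
  have hm : (a * q + b) / (1 + q) = a + (b - a) * (1 + q)⁻¹ := by
    field_simp
    ring
  have hchord : 1 / (1 + q) * (q * f a + f b) = (1 - (1 + q)⁻¹) * f a + (1 + q)⁻¹ * f b := by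
    field_simp
    ring
  rw [hR, hm, hchord]
  exact hconv.hermite_hadamard_tsum hab (fun k ↦ by have := sub_pos.2 hq1; positivity)
    (hasSum_one_sub_mul_pow hq0.le hq1) (fun k ↦ ⟨by positivity, pow_le_one₀ hq0.le hq1.le⟩)
    (hasSum_one_sub_mul_pow_mul_pow hq0.le hq1) ⟨by positivity, inv_lt_one_of_one_lt₀ (by linarith)⟩

/-- q-Hermite–Hadamard inequality for the Riemann-type q-integral. -/
theorem q_hermite_hadamard_Rq (q a b : ℝ) (f : ℝ → ℝ)
    (hq0 : 0 < q) (hq1 : q < 1) (hab : a < b)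
    (hcont : ContinuousOn f (Icc a b)) (hconv : ConvexOn ℝ (Icc a b) f) :
    f ((a * q + b) / (1 + q)) ≤
        (1 / (b - a)) * ((b - a) * (1 - q) * ∑' k : ℕ, f (a + (b - a) * q ^ k) * q ^ k) ∧
      (1 / (b - a)) * ((b - a) * (1 - q) * ∑' k : ℕ, f (a + (b - a) * q ^ k) * q ^ k) ≤
        (1 / (1 + q)) * (q * f a + f b) :=
  q_hermite_hadamard_Rq_general q a b f hq0 hq1 hab hconv
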